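/- For every γ > 0, the ratio R_γ(p) = I_{γ+1}(p)/I_γ(p) is a strictly increasing function of p on (0, ∞). -/

import Mathlib

/-!
With `f = I_γ`, `g = I_{γ+1}` the recurrences `f' = g + (γ/p) f` and `g' = f - ((γ+1)/p) g` give
`(g/f)' = H / (p f²)` with `H = p (f² - g²) - (2γ+1) f g`. The same recurrences give
`H' = (2γ+1) f g / p > 0`, and `H → 0` as `p → 0⁺` because `γ > 0`; hence `H > 0` and
`(g/f)' > 0` on `(0, ∞)`.
The recurrences are read off from `I_ν(x) = (x/2)^ν F_ν((x/2)²)`, where the entire series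
`F_ν(t) = ∑ t^k / (k! Γ(k+ν+1))` satisfies `F_ν' = F_{ν+1}` and `F_ν = t F_{ν+2} + (ν+1) F_{ν+1}`.
-/

/-- Modified Bessel function of the first kind of real order `ν`,
defined via its power series. -/
noncomputable def besselI (ν x : ℝ) : ℝ :=
  ∑' k : ℕ, (x / 2) ^ (2 * (k : ℝ) + ν) / ((k.factorial : ℝ) * Real.Gamma ((k : ℝ) + ν + 1))

open Real Filter Set Topology
open scoped Nat

noncomputable def besselCoeff (ν : ℝ) (k : ℕ) : ℝ := (k ! * Gamma (k + ν + 1))⁻¹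

/-- The regularized hypergeometric function `₀F̃₁(; ν + 1; t)`. -/
noncomputable def besselSeries (ν t : ℝ) : ℝ := ∑' k : ℕ, besselCoeff ν k * t ^ k

section Coefficients

variable {ν : ℝ}

lemma Gamma_le_Gamma_nat_add (hν : 0 ≤ ν) (k : ℕ) : Gamma (ν + 1) ≤ Gamma (k + ν + 1) := by
  induction k with
  | zero => simp
  | succ k ih =>
    have hpos : 0 < Gamma (k + ν + 1) := Gamma_pos_of_pos (by positivity)
    have hk : (1 : ℝ) ≤ k + ν + 1 := by linarith [k.cast_nonneg (α := ℝ)]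
    calc Gamma (ν + 1) ≤ Gamma (k + ν + 1) := ih
      _ ≤ (k + ν + 1) * Gamma (k + ν + 1) := le_mul_of_one_le_left hpos.le hk
      _ = Gamma ((k + 1 : ℕ) + ν + 1) := by
        rw [← Gamma_add_one (by positivity)]; push_cast; ring_nf

lemma besselCoeff_pos (hν : 0 ≤ ν) (k : ℕ) : 0 < besselCoeff ν k :=
  inv_pos.2 (mul_pos (by positivity) (Gamma_pos_of_pos (by positivity)))

lemma besselCoeff_le (hν : 0 ≤ ν) (k : ℕ) : besselCoeff ν k ≤ (k ! : ℝ)⁻¹ * (Gamma (ν + 1))⁻¹ := by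
  rw [besselCoeff, mul_inv]
  gcongr
  exact Gamma_le_Gamma_nat_add hν k

lemma succ_mul_besselCoeff_succ (ν : ℝ) (k : ℕ) :
    (k + 1) * besselCoeff ν (k + 1) = besselCoeff (ν + 1) k := by
  rw [besselCoeff, besselCoeff, Nat.factorial_succ]
  push_cast
  rw [show (k : ℝ) + 1 + ν + 1 = k + (ν + 1) + 1 by ring]
  field_simp

lemma besselCoeff_eq_mul_besselCoeff_add_one (hν : 0 ≤ ν) (k : ℕ) :
    besselCoeff ν k = (k + ν + 1) * besselCoeff (ν + 1) k := by
  have hk : (k : ℝ) + ν + 1 ≠ 0 := by positivity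
  rw [besselCoeff, besselCoeff, show (k : ℝ) + (ν + 1) + 1 = k + ν + 1 + 1 by ring,
    Gamma_add_one hk]
  field_simp

end Coefficients

section Series

variable {ν : ℝ}

lemma summable_besselSeries (hν : 0 ≤ ν) (t : ℝ) :
    Summable fun k : ℕ => besselCoeff ν k * t ^ k := by
  refine ((Real.summable_pow_div_factorial |t|).div_const (Gamma (ν + 1))).of_norm_bounded
    fun k => ?_
  rw [norm_mul, norm_pow, Real.norm_eq_abs, Real.norm_eq_abs,
    abs_of_pos (besselCoeff_pos hν k)]
  calc besselCoeff ν k * |t| ^ k ≤ (k ! : ℝ)⁻¹ * (Gamma (ν + 1))⁻¹ * |t| ^ k := by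
        gcongr; exact besselCoeff_le hν k
    _ = |t| ^ k / k ! / Gamma (ν + 1) := by ring

lemma hasSum_besselSeries (hν : 0 ≤ ν) (t : ℝ) :
    HasSum (fun k : ℕ => besselCoeff ν k * t ^ k) (besselSeries ν t) :=
  (summable_besselSeries hν t).hasSum

lemma besselSeries_pos (hν : 0 ≤ ν) {t : ℝ} (ht : 0 ≤ t) : 0 < besselSeries ν t :=
  (summable_besselSeries hν t).tsum_pos
    (fun k => mul_nonneg (besselCoeff_pos hν k).le (pow_nonneg ht k)) 0
    (by simpa using besselCoeff_pos hν 0)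

lemma hasSum_besselSeries_termwise_deriv (hν : 0 ≤ ν) (t : ℝ) :
    HasSum (fun k : ℕ => k * besselCoeff ν k * t ^ (k - 1)) (besselSeries (ν + 1) t) := by
  rw [← hasSum_nat_add_iff' 1]
  simpa [besselSeries, succ_mul_besselCoeff_succ] using
    hasSum_besselSeries (by linarith : 0 ≤ ν + 1) t

lemma hasDerivAt_besselSeries (hν : 0 ≤ ν) (t : ℝ) :
    HasDerivAt (besselSeries ν) (besselSeries (ν + 1) t) t := by
  set r := |t| + 1
  have ht : t ∈ Ioo (-r) r := abs_lt.1 (by linarith)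
  have hr : 0 ≤ r := by positivity
  rw [← (hasSum_besselSeries_termwise_deriv hν t).tsum_eq]
  refine hasDerivAt_tsum_of_isPreconnected (g' := fun k y => k * besselCoeff ν k * y ^ (k - 1))
    (hasSum_besselSeries_termwise_deriv hν r).summable isOpen_Ioo isPreconnected_Ioo
    (fun k y _ => ((hasDerivAt_pow k y).const_mul (besselCoeff ν k)).congr_deriv (by ring))
    (fun k y hy => ?_) ht (summable_besselSeries hν t) ht
  rw [norm_mul, norm_mul, norm_pow, Real.norm_eq_abs, Real.norm_eq_abs, Real.norm_eq_abs,
    abs_of_pos (besselCoeff_pos hν k), Nat.abs_cast]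
  have := besselCoeff_pos hν k
  gcongr
  exact (abs_lt.2 hy).le

lemma besselSeries_eq_add (hν : 0 ≤ ν) (t : ℝ) :
    besselSeries ν t = t * besselSeries (ν + 2) t + (ν + 1) * besselSeries (ν + 1) t := by
  have hν₁ : 0 ≤ ν + 1 := by linarith
  have hsum := ((hasSum_besselSeries_termwise_deriv hν₁ t).mul_left t).add
    ((hasSum_besselSeries hν₁ t).mul_left (ν + 1))
  rw [show ν + 1 + 1 = ν + 2 by ring] at hsum
  refine (hsum.congr_fun fun k => ?_).tsum_eq
  rw [besselCoeff_eq_mul_besselCoeff_add_one hν]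
  rcases k with _ | k
  · simp
  · rw [Nat.add_sub_cancel, pow_succ]; push_cast; ring

end Series

section BesselI

variable {ν x : ℝ}

lemma besselI_eq_rpow_mul_besselSeries (ν : ℝ) (hx : 0 < x) :
    besselI ν x = (x / 2) ^ ν * besselSeries ν ((x / 2) ^ 2) := by
  rw [besselI, besselSeries, ← tsum_mul_left]
  congr 1 with k
  rw [rpow_add (by positivity), show 2 * (k : ℝ) = ((2 * k : ℕ) : ℝ) by push_cast; ring,
    rpow_natCast, pow_mul, besselCoeff]
  ring

lemma besselI_pos (hν : 0 ≤ ν) (hx : 0 < x) : 0 < besselI ν x := by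
  rw [besselI_eq_rpow_mul_besselSeries ν hx]
  exact mul_pos (by positivity) (besselSeries_pos hν (by positivity))

lemma hasDerivAt_besselI (hν : 0 ≤ ν) (hx : 0 < x) :
    HasDerivAt (besselI ν) (besselI (ν + 1) x + ν / x * besselI ν x) x := by
  have hpow : HasDerivAt (fun y => (y / 2) ^ ν) (ν * (x / 2) ^ (ν - 1) * (1 / 2)) x :=
    (hasDerivAt_rpow_const (Or.inl (by positivity))).comp x ((hasDerivAt_id x).div_const 2)
  have hser := (hasDerivAt_besselSeries hν ((x / 2) ^ 2)).comp x
    ((hasDerivAt_pow 2 (x / 2)).comp x ((hasDerivAt_id x).div_const 2))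
  refine (hpow.mul hser).congr_of_eventuallyEq ?_ |>.congr_deriv ?_
  · filter_upwards [Ioi_mem_nhds hx] with y hy
    exact besselI_eq_rpow_mul_besselSeries ν hy
  · rw [besselI_eq_rpow_mul_besselSeries _ hx, besselI_eq_rpow_mul_besselSeries _ hx,
      rpow_add_one (by positivity), rpow_sub_one (by positivity)]
    simp only [Function.comp_apply, id]
    field_simp
    ring

lemma besselI_eq_add (hν : 0 ≤ ν) (hx : 0 < x) :
    besselI ν x = besselI (ν + 2) x + 2 * (ν + 1) / x * besselI (ν + 1) x := by
  simp only [besselI_eq_rpow_mul_besselSeries _ hx]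
  rw [besselSeries_eq_add hν, rpow_add (by positivity), rpow_add_one (by positivity), rpow_two]
  field_simp

lemma hasDerivAt_besselI_add_one (hν : 0 ≤ ν) (hx : 0 < x) :
    HasDerivAt (besselI (ν + 1)) (besselI ν x - (ν + 1) / x * besselI (ν + 1) x) x :=
  (hasDerivAt_besselI (by linarith) hx).congr_deriv <| by
    rw [besselI_eq_add hν hx, show ν + 1 + 1 = ν + 2 by ring]
    ring

lemma tendsto_besselI_nhdsGT_zero (hν : 0 < ν) : Tendsto (besselI ν) (𝓝[>] 0) (𝓝 0) := by
  have hF : Continuous (besselSeries ν) :=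
    continuous_iff_continuousAt.2 fun t => (hasDerivAt_besselSeries hν.le t).continuousAt
  have hcont : ContinuousAt (fun x : ℝ => (x / 2) ^ ν * besselSeries ν ((x / 2) ^ 2)) 0 :=
    ((continuousAt_id.div_const 2).rpow_const (Or.inr hν.le)).mul (by fun_prop)
  have h := hcont.tendsto
  rw [zero_div, zero_rpow hν.ne', zero_mul] at h
  exact (h.mono_left nhdsWithin_le_nhds).congr' <| eventually_nhdsWithin_of_forall
    fun x hx => (besselI_eq_rpow_mul_besselSeries ν hx).symm

end BesselI

lemma StrictMonoOn.lt_of_tendsto_nhdsGT {α β : Type*} [LinearOrder α] [TopologicalSpace α]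
    [OrderTopology α] [DenselyOrdered α] [Preorder β] [TopologicalSpace β]
    [ClosedIicTopology β] {f : α → β} {a x : α} {b : β} (hf : StrictMonoOn f (Ioi a))
    (hlim : Tendsto f (𝓝[>] a) (𝓝 b)) (hx : a < x) : b < f x := by
  have : (𝓝[>] a).NeBot := nhdsGT_neBot_of_exists_gt ⟨x, hx⟩
  obtain ⟨m, ham, hmx⟩ := exists_between hx
  calc b ≤ f m := le_of_tendsto hlim <| by
        filter_upwards [Ioo_mem_nhdsGT ham] with t ht
        exact (hf ht.1 ham ht.2).le
    _ < f x := hf ham hx hmx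

lemma strictMonoOn_of_hasDerivAt_pos {D : Set ℝ} (hD : Convex ℝ D)
    {f f' : ℝ → ℝ} (hf : ∀ x ∈ D, HasDerivAt f (f' x) x) (hf' : ∀ x ∈ D, 0 < f' x) :
    StrictMonoOn f D :=
  strictMonoOn_of_hasDerivWithinAt_pos hD (fun x hx => (hf x hx).continuousAt.continuousWithinAt)
    (fun x hx => (hf x (interior_subset hx)).hasDerivWithinAt)
    (fun x hx => hf' x (interior_subset hx))

section Ratio

variable {γ p : ℝ}

/-- `p · I_γ(p)² · R'(p)` for the ratio `R = I_{γ+1} / I_γ`. -/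
noncomputable def besselRatioNumerator (γ p : ℝ) : ℝ :=
  p * (besselI γ p ^ 2 - besselI (γ + 1) p ^ 2) - (2 * γ + 1) * besselI γ p * besselI (γ + 1) p

lemma hasDerivAt_besselRatioNumerator (hγ : 0 ≤ γ) (hp : 0 < p) :
    HasDerivAt (besselRatioNumerator γ)
      ((2 * γ + 1) * besselI γ p * besselI (γ + 1) p / p) p := by
  have hf := hasDerivAt_besselI hγ hp
  have hg := hasDerivAt_besselI_add_one hγ hp
  refine ((((hasDerivAt_id p).mul ((hf.pow 2).sub (hg.pow 2))).sub
    ((hf.const_mul (2 * γ + 1)).mul hg))).congr_deriv ?_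
  simp only [id, Pi.sub_apply, Pi.pow_apply]
  field_simp
  ring

lemma tendsto_besselRatioNumerator_nhdsGT_zero (hγ : 0 < γ) :
    Tendsto (besselRatioNumerator γ) (𝓝[>] 0) (𝓝 0) := by
  have hf := tendsto_besselI_nhdsGT_zero hγ
  have hg := tendsto_besselI_nhdsGT_zero (by linarith : 0 < γ + 1)
  have hid : Tendsto id (𝓝[>] (0 : ℝ)) (𝓝 0) := nhdsWithin_le_nhds
  unfold besselRatioNumerator
  simpa using (hid.mul ((hf.pow 2).sub (hg.pow 2))).sub ((hf.const_mul (2 * γ + 1)).mul hg)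

lemma besselRatioNumerator_pos (hγ : 0 < γ) (hp : 0 < p) : 0 < besselRatioNumerator γ p := by
  have hmono : StrictMonoOn (besselRatioNumerator γ) (Ioi 0) :=
    strictMonoOn_of_hasDerivAt_pos (convex_Ioi 0)
      (fun q hq => hasDerivAt_besselRatioNumerator hγ.le hq) fun q (hq : 0 < q) => by
        have := besselI_pos hγ.le hq
        have := besselI_pos (by linarith : 0 ≤ γ + 1) hq
        positivity
  exact hmono.lt_of_tendsto_nhdsGT (tendsto_besselRatioNumerator_nhdsGT_zero hγ) hp

lemma hasDerivAt_besselI_ratio (hγ : 0 ≤ γ) (hp : 0 < p) :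
    HasDerivAt (fun q => besselI (γ + 1) q / besselI γ q)
      (besselRatioNumerator γ p / (p * besselI γ p ^ 2)) p := by
  have hf := besselI_pos hγ hp
  refine ((hasDerivAt_besselI_add_one hγ hp).div (hasDerivAt_besselI hγ hp) hf.ne').congr_deriv ?_
  rw [besselRatioNumerator]
  field_simp
  ring

end Ratio

/-- For every `γ > 0`, the ratio `R_γ(p) = I_{γ+1}(p)/I_γ(p)` is strictly
increasing in `p` on `(0, ∞)`. -/
theorem besselI_ratio_strictMonoOn (γ : ℝ) (hγ : 0 < γ) :
    StrictMonoOn (fun p : ℝ => besselI (γ + 1) p / besselI γ p) (Set.Ioi 0) := by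
  refine strictMonoOn_of_hasDerivAt_pos (convex_Ioi 0)
    (fun p hp => hasDerivAt_besselI_ratio hγ.le hp) fun p (hp : 0 < p) => ?_
  have := besselRatioNumerator_pos hγ hp
  have := besselI_pos hγ.le hp
  positivity
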